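/- Let G and H be finite simple graphs containing no isolated vertices. Then max{γ(G)·γ_t(H), γ_t(G)·γ(H)} ≤ 2·γ(G □ H). -/
import Mathlib


open SimpleGraph

/-- `D` is a dominating set of `G`: every vertex not in `D` has a neighbor in `D`. -/
def IsDomSet {V : Type*} (G : SimpleGraph V) (D : Finset V) : Prop :=
  ∀ v : V, v ∉ D → ∃ u ∈ D, G.Adj u v

/-- `D` is a total dominating set of `G`: every vertex has a neighbor in `D`. -/
def IsTotalDomSet {V : Type*} (G : SimpleGraph V) (D : Finset V) : Prop :=
  ∀ v : V, ∃ u ∈ D, G.Adj u v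

/-- The domination number `γ(G)`. -/
noncomputable def domNum {V : Type*} [Fintype V] (G : SimpleGraph V) : ℕ :=
  sInf {k : ℕ | ∃ D : Finset V, IsDomSet G D ∧ D.card = k}

/-- The total domination number `γ_t(G)`. -/
noncomputable def totalDomNum {V : Type*} [Fintype V] (G : SimpleGraph V) : ℕ :=
  sInf {k : ℕ | ∃ D : Finset V, IsTotalDomSet G D ∧ D.card = k}

lemma domNum_exists {V : Type*} [Fintype V] (G : SimpleGraph V) :
    ∃ D : Finset V, IsDomSet G D ∧ D.card = domNum G := by
  have hne : {k : ℕ | ∃ D : Finset V, IsDomSet G D ∧ D.card = k}.Nonempty :=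
    ⟨Finset.univ.card, Finset.univ, fun v hv => absurd (Finset.mem_univ v) hv, rfl⟩
  obtain ⟨D, hD, hc⟩ := Nat.sInf_mem hne
  exact ⟨D, hD, hc⟩

lemma domNum_le {V : Type*} [Fintype V] (G : SimpleGraph V) (D : Finset V)
    (hD : IsDomSet G D) : domNum G ≤ D.card :=
  Nat.sInf_le ⟨D, hD, rfl⟩

lemma totalDomNum_le {V : Type*} [Fintype V] (G : SimpleGraph V) (D : Finset V)
    (hD : IsTotalDomSet G D) : totalDomNum G ≤ D.card :=
  Nat.sInf_le ⟨D, hD, rfl⟩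

lemma domNum_boxProd_comm_le {V W : Type*} [Fintype V] [Fintype W]
    (G : SimpleGraph V) (H : SimpleGraph W) :
    domNum (H □ G) ≤ domNum (G □ H) := by
  classical
  obtain ⟨D, hD, hc⟩ := domNum_exists (G □ H)
  have hdom : IsDomSet (H □ G) (D.image Prod.swap) := by
    intro x hx
    have hxD : x.swap ∉ D := by
      intro h
      exact hx (Finset.mem_image.2 ⟨x.swap, h, by simp⟩)
    obtain ⟨y, hyD, hadj⟩ := hD x.swap hxD
    refine ⟨y.swap, Finset.mem_image.2 ⟨y, hyD, rfl⟩, ?_⟩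
    rw [SimpleGraph.boxProd_adj] at hadj ⊢
    rcases hadj with ⟨h1, h2⟩ | ⟨h1, h2⟩
    · exact Or.inr ⟨h1, h2⟩
    · exact Or.inl ⟨h1, h2⟩
  calc domNum (H □ G) ≤ (D.image Prod.swap).card := domNum_le _ _ hdom
    _ ≤ D.card := Finset.card_image_le
    _ = domNum (G □ H) := hc

lemma key_ineq {V W : Type*} [Fintype V] [Fintype W]
    (G : SimpleGraph V) (H : SimpleGraph W)
    (hH : ∀ w : W, ∃ u : W, H.Adj u w) :
    domNum G * totalDomNum H ≤ 2 * domNum (G □ H) := by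
  classical
  obtain ⟨U, hU, hUcard⟩ := domNum_exists G
  obtain ⟨D, hD, hDcard⟩ := domNum_exists (G □ H)
  -- choose a dominator p v ∈ U for each v
  have hp : ∀ v : V, ∃ u, u ∈ U ∧ (u = v ∨ G.Adj u v) := by
    intro v
    by_cases h : v ∈ U
    · exact ⟨v, h, Or.inl rfl⟩
    · obtain ⟨u, hu, hadj⟩ := hU v h
      exact ⟨u, hu, Or.inr hadj⟩
  choose p hpU hpAdj using hp
  choose f hf using hH
  set A : V → Finset W :=
    fun u => Finset.univ.filter (fun w => ∃ x ∈ D, p x.1 = u ∧ H.Adj x.2 w) with hA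
  -- Claim 1: per u, a total dominating set of H
  have claim1 : ∀ u : V,
      totalDomNum H + (A u).card ≤
        (D.filter (fun x => p x.1 = u)).card + Fintype.card W := by
    intro u
    set T : Finset W := (D.filter (fun x => p x.1 = u)).image Prod.snd ∪
      (Finset.univ \ A u).image f with hT
    have htot : IsTotalDomSet H T := by
      intro w
      by_cases hw : w ∈ A u
      · rw [hA] at hw
        simp only [Finset.mem_filter, Finset.mem_univ, true_and] at hw
        obtain ⟨x, hxD, hpx, hadj⟩ := hw
        refine ⟨x.2, ?_, hadj⟩
        exact Finset.mem_union_left _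
          (Finset.mem_image.2 ⟨x, Finset.mem_filter.2 ⟨hxD, hpx⟩, rfl⟩)
      · refine ⟨f w, ?_, hf w⟩
        exact Finset.mem_union_right _
          (Finset.mem_image.2 ⟨w, Finset.mem_sdiff.2 ⟨Finset.mem_univ w, hw⟩, rfl⟩)
    have h1 : totalDomNum H ≤ T.card := totalDomNum_le _ _ htot
    have h2 : T.card ≤ (D.filter (fun x => p x.1 = u)).card + (Finset.univ \ A u).card :=
      le_trans (Finset.card_union_le _ _)
        (add_le_add Finset.card_image_le Finset.card_image_le)
    have h3 : (Finset.univ \ A u).card + (A u).card = Fintype.card W := by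
      rw [Finset.card_sdiff_of_subset (Finset.subset_univ _)]
      rw [Nat.sub_add_cancel (Finset.card_le_card (Finset.subset_univ _))]
      rfl
    omega
  -- Claim 2: per w, a dominating set of G
  have claim2 : ∀ w : W,
      domNum G ≤ (D.filter (fun x => x.2 = w)).card +
        (U.filter (fun u => w ∈ A u)).card := by
    intro w
    set S : Finset V := (D.filter (fun x => x.2 = w)).image Prod.fst ∪
      U.filter (fun u => w ∈ A u) with hS
    have hdom : IsDomSet G S := by
      intro v hv
      by_cases hw : w ∈ A (p v)
      · have hmem : p v ∈ S := Finset.mem_union_right _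
          (Finset.mem_filter.2 ⟨hpU v, hw⟩)
        rcases hpAdj v with heq | hadj
        · exact absurd (heq ▸ hmem) hv
        · exact ⟨p v, hmem, hadj⟩
      · have hvwD : (v, w) ∉ D := by
          intro h
          exact hv (Finset.mem_union_left _
            (Finset.mem_image.2 ⟨(v, w), Finset.mem_filter.2 ⟨h, rfl⟩, rfl⟩))
        obtain ⟨x, hxD, hadj⟩ := hD (v, w) hvwD
        rw [SimpleGraph.boxProd_adj] at hadj
        rcases hadj with ⟨h1, h2⟩ | ⟨h1, h2⟩
        · refine ⟨x.1, Finset.mem_union_left _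
            (Finset.mem_image.2 ⟨x, Finset.mem_filter.2 ⟨hxD, h2⟩, rfl⟩), h1⟩
        · exfalso
          apply hw
          rw [hA]
          simp only [Finset.mem_filter, Finset.mem_univ, true_and]
          exact ⟨x, hxD, by rw [h2], h1⟩
    calc domNum G ≤ S.card := domNum_le _ _ hdom
      _ ≤ (D.filter (fun x => x.2 = w)).card + (U.filter (fun u => w ∈ A u)).card :=
        le_trans (Finset.card_union_le _ _) (add_le_add Finset.card_image_le le_rfl)
  -- sum up claim2 over all w
  have sum2 : ∑ w : W, (D.filter (fun x => x.2 = w)).card = D.card :=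
    (Finset.card_eq_sum_card_fiberwise (fun x _ => Finset.mem_univ x.2)).symm
  have sum3 : ∑ w : W, (U.filter (fun u => w ∈ A u)).card = ∑ u ∈ U, (A u).card := by
    simp only [Finset.card_filter]
    rw [Finset.sum_comm]
    congr 1
    ext u
    rw [Finset.sum_ite_mem, Finset.univ_inter, Finset.sum_const, smul_eq_mul, mul_one]
  have big2 : Fintype.card W * domNum G ≤ D.card + ∑ u ∈ U, (A u).card := by
    calc Fintype.card W * domNum G = ∑ _w : W, domNum G := by
          rw [Finset.sum_const, smul_eq_mul, Finset.card_univ]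
      _ ≤ ∑ w : W, ((D.filter (fun x => x.2 = w)).card +
            (U.filter (fun u => w ∈ A u)).card) := Finset.sum_le_sum (fun w _ => claim2 w)
      _ = D.card + ∑ u ∈ U, (A u).card := by rw [Finset.sum_add_distrib, sum2, sum3]
  -- sum up claim1 over u ∈ U
  have sum1 : ∑ u ∈ U, (D.filter (fun x => p x.1 = u)).card = D.card :=
    (Finset.card_eq_sum_card_fiberwise (fun x _ => hpU x.1)).symm
  have big1 : U.card * totalDomNum H + ∑ u ∈ U, (A u).card ≤
      D.card + U.card * Fintype.card W := by
    calc U.card * totalDomNum H + ∑ u ∈ U, (A u).card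
        = ∑ u ∈ U, (totalDomNum H + (A u).card) := by
          rw [Finset.sum_add_distrib, Finset.sum_const, smul_eq_mul]
      _ ≤ ∑ u ∈ U, ((D.filter (fun x => p x.1 = u)).card + Fintype.card W) :=
          Finset.sum_le_sum (fun u _ => claim1 u)
      _ = D.card + U.card * Fintype.card W := by
          rw [Finset.sum_add_distrib, sum1, Finset.sum_const, smul_eq_mul]
  have final : U.card * totalDomNum H ≤ 2 * D.card := by
    have h : U.card * Fintype.card W ≤ D.card + ∑ u ∈ U, (A u).card := by
      rw [mul_comm, ← hUcard] at big2
      exact big2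
    omega
  rw [← hUcard, ← hDcard] at *
  exact final

/-- `max{γ(G)·γ_t(H), γ_t(G)·γ(H)} ≤ 2·γ(G □ H)` for graphs without isolated vertices. -/
theorem max_domNum_totalDomNum_le_two_mul_domNum_boxProd
    {V W : Type*} [Fintype V] [Fintype W]
    (G : SimpleGraph V) (H : SimpleGraph W)
    (hG : ∀ v : V, ∃ u : V, G.Adj u v) (hH : ∀ w : W, ∃ u : W, H.Adj u w) :
    max (domNum G * totalDomNum H) (totalDomNum G * domNum H)
      ≤ 2 * domNum (G □ H) := by
  refine max_le ?_ ?_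
  · exact key_ineq G H hH
  · have h1 : domNum H * totalDomNum G ≤ 2 * domNum (H □ G) := key_ineq H G hG
    have h2 : domNum (H □ G) ≤ domNum (G □ H) := domNum_boxProd_comm_le G H
    rw [mul_comm]
    omega
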